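/- Let X be a locally finite connected multigraph with minimum degree 2 in which small cycles are dense (there is R > 0 such that every ball B(x,R) contains a cycle) and which is not a cycle. Then ρ(Q) = limsup_{n→∞} q^(n)(x,y)^{1/n} is independent of x and y, and 0 < ρ(Q) ≤ 1. -/

import Mathlib

open scoped BigOperators
open Filter

/-- A multigraph given by its set of *oriented* edges. Each oriented edge `e`
has an initial vertex `tail e = e⁻`, a terminal vertex `head e = e⁺`, and a
reversal `bar e = ě` with `ě ≠ e` (loops are counted twice). Local finiteness
is built in. -/
structure Multigraph where
  V : Type
  E : Type
  tail : E → V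
  head : E → V
  bar : E → E
  bar_bar : ∀ e, bar (bar e) = e
  bar_ne : ∀ e, bar e ≠ e
  head_bar : ∀ e, head (bar e) = tail e
  locFin : ∀ x, {e | tail e = x}.Finite

namespace Multigraph
variable (G : Multigraph)

/-- The degree of a vertex: the number of oriented edges emanating from it. -/
noncomputable def deg (x : G.V) : ℕ := (G.locFin x).toFinset.card

/-- `e → f`: `f` may follow `e` in a non-backtracking walk. -/
def Step (e f : G.E) : Prop := G.tail f = G.head e ∧ f ≠ G.bar e

/-- `e ⇒ f`: there is a non-backtracking walk from `e` to `f`. -/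
def Reach : G.E → G.E → Prop := Relation.ReflTransGen G.Step

/-- One-step transition probabilities of the edge non-backtracking random walk. -/
noncomputable def q (e f : G.E) : ℝ :=
  open Classical in
  if G.Step e f then 1 / ((G.deg (G.head e) : ℝ) - 1) else 0

/-- `n`-step transition probabilities `q_E^(n)` of the edge NBRW. -/
noncomputable def qn (G : Multigraph) : ℕ → G.E → G.E → ℝ
  | 0, e, f => open Classical in if e = f then 1 else 0
  | n + 1, e, f => ∑' g : G.E, qn G n e g * G.q g f

/-- Vertex NBRW transition probabilities:
`q^(n)(x,y) = (1/deg x) ∑_{e⁺=x, f⁺=y} q_E^(n)(e,f)`. -/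
noncomputable def qv (n : ℕ) (x y : G.V) : ℝ :=
  (1 / (G.deg x : ℝ)) *
    ∑' (e : {e : G.E // G.head e = x}) (f : {f : G.E // G.head f = y}),
      G.qn n e.1 f.1

def Adj (x y : G.V) : Prop := ∃ e : G.E, G.tail e = x ∧ G.head e = y

def Connected : Prop := ∀ x y : G.V, Relation.ReflTransGen G.Adj x y

/-- There is a walk of length `n` from `x` to `y`. -/
def WalkLen (G : Multigraph) : ℕ → G.V → G.V → Prop
  | 0, x, y => x = y
  | n + 1, x, y => ∃ z, G.Adj x z ∧ WalkLen G n z y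

/-- Graph distance. -/
noncomputable def dist (x y : G.V) : ℕ := sInf {n | G.WalkLen n x y}

/-- A cycle: a nonempty list of distinct oriented edges, with distinct initial
vertices, such that consecutive edges (cyclically) form non-backtracking steps. -/
def IsCycle (l : List G.E) : Prop :=
  l ≠ [] ∧ l.Nodup ∧ (l.map G.tail).Nodup ∧ List.Chain' G.Step (l ++ l.take 1)

/-- Small cycles are dense: some radius `R` works for every ball. -/
def SmallCyclesDense : Prop :=
  ∃ R : ℕ, ∀ x : G.V, ∃ l : List G.E, G.IsCycle l ∧ ∀ e ∈ l, G.dist x (G.tail e) ≤ R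

/-- `X` is a (finite) cycle graph. -/
def IsCycleGraph : Prop := (Set.univ : Set G.V).Finite ∧ ∀ x, G.deg x = 2

def Bipartite : Prop := ∃ c : G.V → Bool, ∀ e : G.E, c (G.tail e) ≠ c (G.head e)

end Multigraph

/-!
The point is that the non-backtracking walk on oriented edges is irreducible. For this it suffices
that every edge can be reversed, `e ⇒ ě`: then every edge leaving the head of `e` is reachable
from `e`, and connectedness does the rest. To reverse `e` it is enough to reach an edge `f` that
enters a cycle from outside, since `f` can run around the cycle and leave along `f̌`, giving
`e ⇒ f ⇒ f̌ ⇒ ě`. Off the cycles such an `f` is found by descending the distance to the cycle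
vertices; an edge that cannot descend goes sideways or upwards, and upwards only boundedly often
because small cycles are dense. From an edge on a cycle one leaves the cycle (possible since `X`
is not a cycle) and either descends as before or follows another cycle until it first re-enters
the first one.

Irreducibility bounds `q^(n)(x,y)` by finitely many shifted copies `C q^(n+d)(x',y')`, so all
root limsups coincide. A closed walk of length `m` and probability `δ` gives
`q^(mk)(x,x) ≥ δ^k / deg x`, hence `ρ > 0`, while `q^(n) ≤ 1` gives `ρ ≤ 1`.
-/

lemma List.Forall₂.rotate {α β : Type*} {R : α → β → Prop} {l₁ : List α} {l₂ : List β}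
    (h : List.Forall₂ R l₁ l₂) (n : ℕ) : List.Forall₂ R (l₁.rotate n) (l₂.rotate n) := by
  rw [List.rotate_eq_drop_append_take_mod, List.rotate_eq_drop_append_take_mod, h.length_eq]
  exact List.rel_append (List.forall₂_drop _ h) (List.forall₂_take _ h)

lemma List.Forall₂.exists_mem_right {α β : Type*} {R : α → β → Prop} {l₁ : List α}
    {l₂ : List β} (h : List.Forall₂ R l₁ l₂) {a : α} (ha : a ∈ l₁) : ∃ b ∈ l₂, R a b := by
  induction h with
  | nil => simp at ha
  | @cons a' b' _ _ hab _ ih =>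
    rcases List.mem_cons.1 ha with rfl | ha
    · exact ⟨b', List.mem_cons_self, hab⟩
    · obtain ⟨b, hb, hr⟩ := ih ha
      exact ⟨b, List.mem_cons_of_mem _ hb, hr⟩

lemma List.Forall₂.exists_mem_left {α β : Type*} {R : α → β → Prop} {l₁ : List α}
    {l₂ : List β} (h : List.Forall₂ R l₁ l₂) {b : β} (hb : b ∈ l₂) : ∃ a ∈ l₁, R a b := by
  obtain ⟨a, ha, hr⟩ := (List.Forall₂.flip (R := fun b a => R a b) h).exists_mem_right hb
  exact ⟨a, ha, hr⟩

lemma List.isChain_append_take_one_iff {α : Type*} {R : α → α → Prop} {l : List α} :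
    List.IsChain R (l ++ l.take 1) ↔ List.Forall₂ R l (l.rotate 1) := by
  cases l with
  | nil => simp
  | cons a t =>
    simpa using List.isChain_cons_append_singleton_iff_forall₂ (R := R) (l := t) (b := a)

section RootLimsup

open Topology

variable {a b : ℕ → ℝ}

lemma isBoundedUnder_rpow_inv (ha0 : ∀ n, 0 ≤ a n) (ha1 : ∀ n, a n ≤ 1) :
    IsBoundedUnder (· ≤ ·) atTop fun n : ℕ => a n ^ (n : ℝ)⁻¹ :=
  isBoundedUnder_of ⟨1, fun n => Real.rpow_le_one (ha0 n) (ha1 n) (by positivity)⟩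

lemma isCoboundedUnder_rpow_inv (ha0 : ∀ n, 0 ≤ a n) :
    IsCoboundedUnder (· ≤ ·) atTop fun n : ℕ => a n ^ (n : ℝ)⁻¹ :=
  (isBoundedUnder_of ⟨0, fun n => Real.rpow_nonneg (ha0 n) _⟩).isCoboundedUnder_le

lemma limsup_rpow_inv_le_of_eventually_le (ha : ∀ n, 0 ≤ a n) {K t : ℝ} (hK : 0 < K) (ht : 0 < t)
    (h : ∀ᶠ n in atTop, a n ≤ K * t ^ n) :
    limsup (fun n : ℕ => a n ^ (n : ℝ)⁻¹) atTop ≤ t := by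
  have hlim : Tendsto (fun n : ℕ => K ^ (n : ℝ)⁻¹ * t) atTop (𝓝 t) := by
    simpa using ((Real.continuousAt_const_rpow hK.ne').tendsto.comp
      (tendsto_inv_atTop_zero.comp tendsto_natCast_atTop_atTop)).mul_const t
  refine (limsup_le_limsup ?_ ?_ hlim.isBoundedUnder_le).trans hlim.limsup_eq.le
  · filter_upwards [h, eventually_gt_atTop 0] with n hn hn0
    calc a n ^ (n : ℝ)⁻¹ ≤ (K * t ^ n) ^ (n : ℝ)⁻¹ := by gcongr; exact ha n
      _ = K ^ (n : ℝ)⁻¹ * t := by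
        rw [Real.mul_rpow hK.le (by positivity), Real.pow_rpow_inv_natCast ht.le hn0.ne']
  · exact isCoboundedUnder_rpow_inv ha

lemma eventually_le_pow_of_limsup_rpow_inv_lt (hb0 : ∀ n, 0 ≤ b n) (hb1 : ∀ n, b n ≤ 1) {t : ℝ}
    (h : limsup (fun n : ℕ => b n ^ (n : ℝ)⁻¹) atTop < t) : ∀ᶠ n in atTop, b n ≤ t ^ n := by
  filter_upwards [eventually_lt_of_limsup_lt h (isBoundedUnder_rpow_inv hb0 hb1),
    eventually_gt_atTop 0] with n hn hn0
  calc b n = (b n ^ (n : ℝ)⁻¹) ^ n := (Real.rpow_inv_natCast_pow (hb0 n) hn0.ne').symm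
    _ ≤ t ^ n := pow_le_pow_left₀ (Real.rpow_nonneg (hb0 n) _) hn.le n

lemma limsup_rpow_inv_le_of_le_sum {ι : Type*} (s : Finset ι) {C : ι → ℝ} {d : ι → ℕ}
    (hC : ∀ j ∈ s, 0 ≤ C j) (ha : ∀ n, 0 ≤ a n) (hb0 : ∀ n, 0 ≤ b n) (hb1 : ∀ n, b n ≤ 1)
    (h : ∀ n, a n ≤ ∑ j ∈ s, C j * b (n + d j)) :
    limsup (fun n : ℕ => a n ^ (n : ℝ)⁻¹) atTop ≤ limsup (fun n : ℕ => b n ^ (n : ℝ)⁻¹) atTop := by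
  refine le_of_forall_gt_imp_ge_of_dense fun t ht => ?_
  have ht0 : 0 < t := ht.trans_le' <| le_limsup_of_frequently_le
    (Frequently.of_forall fun n => Real.rpow_nonneg (hb0 n) _) (isBoundedUnder_rpow_inv hb0 hb1)
  have hsum : 0 ≤ ∑ j ∈ s, C j * t ^ d j :=
    Finset.sum_nonneg fun j hj => mul_nonneg (hC j hj) (by positivity)
  obtain ⟨N, hN⟩ := eventually_atTop.1 (eventually_le_pow_of_limsup_rpow_inv_lt hb0 hb1 ht)
  refine limsup_rpow_inv_le_of_eventually_le ha (by positivity : 0 < ∑ j ∈ s, C j * t ^ d j + 1)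
    ht0 (eventually_atTop.2 ⟨N, fun n hn => (h n).trans ?_⟩)
  calc ∑ j ∈ s, C j * b (n + d j) ≤ ∑ j ∈ s, C j * t ^ d j * t ^ n :=
        Finset.sum_le_sum fun j hj => by
          rw [mul_assoc, ← pow_add, add_comm (d j)]
          exact mul_le_mul_of_nonneg_left (hN _ (by omega)) (hC j hj)
    _ ≤ (∑ j ∈ s, C j * t ^ d j + 1) * t ^ n := by
        rw [← Finset.sum_mul]
        gcongr
        linarith

lemma le_limsup_rpow_inv_of_frequently (ha0 : ∀ n, 0 ≤ a n) (ha1 : ∀ n, a n ≤ 1) {ε : ℝ}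
    (hε : 0 ≤ ε) (h : ∃ᶠ n in atTop, ε ^ n ≤ a n) :
    ε ≤ limsup (fun n : ℕ => a n ^ (n : ℝ)⁻¹) atTop := by
  refine le_limsup_of_frequently_le ?_ (isBoundedUnder_rpow_inv ha0 ha1)
  refine (h.and_eventually (eventually_gt_atTop 0)).mono fun n ⟨hn, hn0⟩ => ?_
  calc ε = (ε ^ n) ^ (n : ℝ)⁻¹ := (Real.pow_rpow_inv_natCast hε hn0.ne').symm
    _ ≤ a n ^ (n : ℝ)⁻¹ := by gcongr

lemma limsup_rpow_inv_le_one (ha0 : ∀ n, 0 ≤ a n) (ha1 : ∀ n, a n ≤ 1) :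
    limsup (fun n : ℕ => a n ^ (n : ℝ)⁻¹) atTop ≤ 1 :=
  limsup_le_of_le (isCoboundedUnder_rpow_inv ha0)
    (Eventually.of_forall fun n => Real.rpow_le_one (ha0 n) (ha1 n) (by positivity))

end RootLimsup

namespace Multigraph

open Function

variable {G : Multigraph} {l : List G.E} {R : ℕ}

lemma tail_bar (e : G.E) : G.tail (G.bar e) = G.head e := by
  simpa only [G.bar_bar] using (G.head_bar (G.bar e)).symm

lemma bar_injective : Injective G.bar :=
  LeftInverse.injective G.bar_bar

lemma Step.bar {e f : G.E} (h : G.Step e f) : G.Step (G.bar f) (G.bar e) :=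
  ⟨by rw [tail_bar, G.head_bar, h.1], fun hf => h.2 (bar_injective (by rw [hf, G.bar_bar]))⟩

lemma Reach.bar {e f : G.E} (h : G.Reach e f) : G.Reach (G.bar f) (G.bar e) := by
  induction h with
  | refl => exact .refl
  | tail _ hstep ih => exact .head hstep.bar ih

lemma mem_locFin_toFinset {x : G.V} {e : G.E} : e ∈ (G.locFin x).toFinset ↔ G.tail e = x :=
  Set.Finite.mem_toFinset _

lemma two_le_deg_of_step {e f : G.E} (h : G.Step e f) : 2 ≤ G.deg (G.head e) :=
  Finset.one_lt_card.2
    ⟨f, mem_locFin_toFinset.2 h.1, G.bar e, mem_locFin_toFinset.2 (tail_bar e), h.2⟩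

lemma exists_step (hdeg : ∀ x, 2 ≤ G.deg x) (e : G.E) : ∃ f, G.Step e f := by
  obtain ⟨a, ha, b, hb, hab⟩ := Finset.one_lt_card.1 (hdeg (G.head e))
  rw [mem_locFin_toFinset] at ha hb
  by_cases hae : a = G.bar e
  · exact ⟨b, hb, fun hbe => hab (hae.trans hbe.symm)⟩
  · exact ⟨a, ha, hae⟩

lemma one_le_deg (hdeg : ∀ x, 2 ≤ G.deg x) (x : G.V) : (1 : ℝ) ≤ G.deg x := by
  exact_mod_cast one_le_two.trans (hdeg x)

lemma exists_head_eq (hdeg : ∀ x, 2 ≤ G.deg x) (x : G.V) : ∃ e, G.head e = x := by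
  obtain ⟨e, he⟩ := Finset.card_pos.1 (lt_of_lt_of_le two_pos (hdeg x))
  exact ⟨G.bar e, by rw [G.head_bar, mem_locFin_toFinset.1 he]⟩

lemma isCycle_iff_forall₂ : G.IsCycle l ↔
    l ≠ [] ∧ l.Nodup ∧ (l.map G.tail).Nodup ∧ List.Forall₂ G.Step l (l.rotate 1) := by
  rw [← List.isChain_append_take_one_iff]
  rfl

namespace IsCycle

lemma forall₂_step (hl : G.IsCycle l) : List.Forall₂ G.Step l (l.rotate 1) :=
  (isCycle_iff_forall₂.1 hl).2.2.2

lemma nodup_map_tail (hl : G.IsCycle l) : (l.map G.tail).Nodup :=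
  hl.2.2.1

lemma exists_step_of_mem (hl : G.IsCycle l) {e : G.E} (he : e ∈ l) : ∃ f ∈ l, G.Step e f := by
  obtain ⟨f, hf, hef⟩ := hl.forall₂_step.exists_mem_right he
  exact ⟨f, List.mem_rotate.1 hf, hef⟩

lemma exists_step_to_mem (hl : G.IsCycle l) {f : G.E} (hf : f ∈ l) : ∃ e ∈ l, G.Step e f :=
  hl.forall₂_step.exists_mem_left (List.mem_rotate.2 hf)

lemma map_head (hl : G.IsCycle l) : l.map G.head = (l.map G.tail).rotate 1 := by
  rw [← List.map_rotate, ← List.forall₂_eq_eq_eq, List.forall₂_map_left_iff,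
    List.forall₂_map_right_iff]
  exact hl.forall₂_step.imp fun _ _ h => h.1.symm

lemma head_mem_tails (hl : G.IsCycle l) {e : G.E} (he : e ∈ l) : G.head e ∈ l.map G.tail := by
  rw [← List.mem_rotate (n := 1), ← hl.map_head]
  exact List.mem_map_of_mem he

lemma eq_of_tail_eq (hl : G.IsCycle l) {e f : G.E} (he : e ∈ l) (hf : f ∈ l)
    (h : G.tail e = G.tail f) : e = f :=
  List.inj_on_of_nodup_map hl.nodup_map_tail he hf h

lemma eq_of_head_eq (hl : G.IsCycle l) {e f : G.E} (he : e ∈ l) (hf : f ∈ l)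
    (h : G.head e = G.head f) : e = f :=
  List.inj_on_of_nodup_map (hl.map_head ▸ List.nodup_rotate.2 hl.nodup_map_tail) he hf h

lemma bar_not_mem (hl : G.IsCycle l) {e : G.E} (he : e ∈ l) : G.bar e ∉ l := fun hbar => by
  obtain ⟨f, hf, hef⟩ := hl.exists_step_of_mem he
  exact hef.2 (hl.eq_of_tail_eq hf hbar (by rw [hef.1, tail_bar]))

lemma chain (hl : G.IsCycle l) : Cycle.Chain G.Step (l : Cycle G.E) := by
  obtain ⟨hne, -, -, hchain⟩ := hl
  obtain ⟨a, t, rfl⟩ := List.exists_cons_of_ne_nil hne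
  exact hchain

lemma reach (hl : G.IsCycle l) {e f : G.E} (he : e ∈ l) (hf : f ∈ l) : G.Reach e f :=
  letI : IsTrans G.E G.Reach := ⟨fun _ _ _ => Relation.ReflTransGen.trans⟩
  Cycle.chain_iff_pairwise.1 (hl.chain.imp fun _ _ => .single) e he f hf

lemma exists_isChain_cons (hl : G.IsCycle l) {e : G.E} (he : e ∈ l) :
    ∃ t, List.IsChain G.Step (e :: (t ++ [e])) := by
  obtain ⟨s, t, rfl⟩ := List.append_of_mem he
  refine ⟨t ++ s, ?_⟩
  rw [← Cycle.chain_coe_cons, ← List.cons_append, ← Cycle.coe_eq_coe.2 List.isRotated_append]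
  exact hl.chain

lemma reverse (hl : G.IsCycle l) : G.IsCycle (l.map G.bar).reverse := by
  obtain ⟨hne, hnodup, -, hstep⟩ := isCycle_iff_forall₂.1 hl
  have hlen : 0 < l.length := List.length_pos_iff.2 hne
  refine isCycle_iff_forall₂.2 ⟨by simpa using hne, List.nodup_reverse.2 (hnodup.map bar_injective),
    ?_, ?_⟩
  · simpa only [List.map_reverse, List.map_map, Function.comp_def, tail_bar, List.nodup_reverse,
      hl.map_head, List.nodup_rotate] using hl.nodup_map_tail
  · have hrot : List.Forall₂ G.Step (l.rotate (l.length - 1)) l := by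
      have := hstep.rotate (l.length - 1)
      rwa [List.rotate_rotate, Nat.add_sub_cancel' hlen, List.rotate_length] at this
    have hrev : (l.map G.bar).reverse.rotate 1 = ((l.rotate (l.length - 1)).map G.bar).reverse := by
      rw [List.map_rotate, List.reverse_rotate, List.length_map, Nat.mod_eq_of_lt (by omega)]
      congr 1
      omega
    rw [hrev, List.forall₂_reverse_iff, List.forall₂_map_left_iff, List.forall₂_map_right_iff]
    exact List.Forall₂.flip (hrot.imp fun _ _ h => h.bar)

lemma reach_bar_of_head_mem (hl : G.IsCycle l) {f : G.E}
    (hhead : G.head f ∈ l.map G.tail) (hf : f ∉ l) (hbar : G.bar f ∉ l) : G.Reach f (G.bar f) := by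
  obtain ⟨c, hc, hfc⟩ := List.mem_map.1 hhead
  obtain ⟨d, hd, hdc⟩ := hl.exists_step_to_mem hc
  have hfc : G.Step f c := ⟨hfc, fun h => hbar (h ▸ hc)⟩
  have hdf : G.Step d (G.bar f) :=
    ⟨by rw [tail_bar, ← hfc.1, hdc.1], fun h => hf (bar_injective h ▸ hd)⟩
  exact .head hfc ((hl.reach hc hd).tail hdf)

end IsCycle

lemma exists_reach_first_head_of_isChain {P : G.V → Prop} :
    ∀ {e b : G.E} {t : List G.E}, List.IsChain G.Step (e :: (t ++ [b])) → P (G.tail b) →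
      ∃ f, G.Reach e f ∧ P (G.head f) ∧ (f = e ∨ ¬ P (G.tail f))
  | e, b, [], h, hb => ⟨e, .refl, (List.isChain_pair.1 h).1 ▸ hb, .inl rfl⟩
  | e, b, c :: t, h, hb => by
    rw [List.cons_append, List.isChain_cons_cons] at h
    by_cases he : P (G.head e)
    · exact ⟨e, .refl, he, .inl rfl⟩
    obtain ⟨f, hcf, hf, hf'⟩ := exists_reach_first_head_of_isChain h.2 hb
    refine ⟨f, .head h.1 hcf, hf, .inr ?_⟩
    rcases hf' with rfl | hf'
    · rwa [h.1.1]
    · exact hf'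

def cycleVerts (G : Multigraph) : Set G.V := {x | ∃ l, G.IsCycle l ∧ x ∈ l.map G.tail}

def CyclesWithin (G : Multigraph) (R : ℕ) : Prop :=
  ∀ x, ∃ n ≤ R, ∃ y ∈ G.cycleVerts, G.WalkLen n x y

noncomputable def distCycleVerts (G : Multigraph) (x : G.V) : ℕ :=
  sInf {n | ∃ y ∈ G.cycleVerts, G.WalkLen n x y}

lemma exists_walkLen_of_reflTransGen {x y : G.V} (h : Relation.ReflTransGen G.Adj x y) :
    ∃ n, G.WalkLen n x y := by
  induction h using Relation.ReflTransGen.head_induction_on with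
  | refl => exact ⟨0, rfl⟩
  | head hxz _ ih =>
    obtain ⟨n, hn⟩ := ih
    exact ⟨n + 1, _, hxz, hn⟩

lemma exists_cyclesWithin (hconn : G.Connected) (hcyc : G.SmallCyclesDense) :
    ∃ R, G.CyclesWithin R := by
  obtain ⟨R, hR⟩ := hcyc
  refine ⟨R, fun x => ?_⟩
  obtain ⟨l, hl, hdist⟩ := hR x
  obtain ⟨e, he⟩ := List.exists_mem_of_ne_nil _ hl.1
  exact ⟨_, hdist e he, G.tail e, ⟨l, hl, List.mem_map_of_mem he⟩,
    Nat.sInf_mem (exists_walkLen_of_reflTransGen (hconn x (G.tail e)))⟩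

lemma IsCycle.exists_exit (hconn : G.Connected) (hnc : ¬ G.IsCycleGraph)
    (hl : G.IsCycle l) : ∃ g, G.tail g ∈ l.map G.tail ∧ g ∉ l ∧ G.bar g ∉ l := by
  by_contra! hno
  have hadj : ∀ u v, u ∈ l.map G.tail → G.Adj u v → v ∈ l.map G.tail := by
    rintro u v hu ⟨g, rfl, rfl⟩
    by_cases hg : g ∈ l
    · exact hl.head_mem_tails hg
    · exact List.mem_map.2 ⟨G.bar g, hno g hu hg, tail_bar g⟩
  obtain ⟨e₀, he₀⟩ := List.exists_mem_of_ne_nil _ hl.1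
  have hall : ∀ v, v ∈ l.map G.tail := fun v => by
    induction hconn (G.tail e₀) v with
    | refl => exact List.mem_map_of_mem he₀
    | tail _ huv ih => exact hadj _ _ ih huv
  refine hnc ⟨(l.map G.tail).finite_toSet.subset fun v _ => hall v, fun v => ?_⟩
  classical
  obtain ⟨a, ha, rfl⟩ := List.mem_map.1 (hall v)
  obtain ⟨p, hp, hpa⟩ := hl.exists_step_to_mem ha
  have hout : (G.locFin (G.tail a)).toFinset = {a, G.bar p} := by
    ext g
    rw [mem_locFin_toFinset, Finset.mem_insert, Finset.mem_singleton]
    constructor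
    · intro hg
      by_cases hgl : g ∈ l
      · exact .inl (hl.eq_of_tail_eq hgl ha hg)
      · have := hl.eq_of_head_eq (hno g (hg ▸ hall _) hgl) hp (by rw [G.head_bar, hg, hpa.1])
        exact .inr (by rw [← this, G.bar_bar])
    · rintro (rfl | rfl)
      · rfl
      · rw [tail_bar, hpa.1]
  rw [deg, hout]
  exact Finset.card_pair fun h => hl.bar_not_mem hp (h ▸ ha)

lemma reach_bar_of_head_mem_cycleVerts {f : G.E} (hhead : G.head f ∈ G.cycleVerts)
    (htail : G.tail f ∉ G.cycleVerts) : G.Reach f (G.bar f) := by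
  obtain ⟨l, hl, hf⟩ := hhead
  refine hl.reach_bar_of_head_mem hf (fun h => htail ⟨l, hl, List.mem_map_of_mem h⟩)
    (fun h => htail ⟨l, hl, ?_⟩)
  simpa only [G.head_bar] using hl.head_mem_tails h

lemma reach_bar_or_exists_mem_isCycle {e : G.E} (he : G.head e ∈ G.cycleVerts) :
    G.Reach e (G.bar e) ∨ ∃ l, G.IsCycle l ∧ e ∈ l := by
  obtain ⟨l, hl, hel⟩ := he
  by_cases h : e ∈ l
  · exact .inr ⟨l, hl, h⟩
  by_cases hb : G.bar e ∈ l
  · exact .inr ⟨_, hl.reverse, List.mem_reverse.2 (List.mem_map.2 ⟨G.bar e, hb, G.bar_bar e⟩)⟩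
  · exact .inl (hl.reach_bar_of_head_mem hel h hb)

lemma distCycleVerts_spec (hR : G.CyclesWithin R) (x : G.V) :
    ∃ y ∈ G.cycleVerts, G.WalkLen (G.distCycleVerts x) x y :=
  Nat.sInf_mem (by obtain ⟨n, -, hn⟩ := hR x; exact ⟨n, hn⟩)

lemma distCycleVerts_le_of_walkLen {x y : G.V} {n : ℕ} (hy : y ∈ G.cycleVerts)
    (h : G.WalkLen n x y) : G.distCycleVerts x ≤ n :=
  Nat.sInf_le ⟨y, hy, h⟩

lemma distCycleVerts_le (hR : G.CyclesWithin R) (x : G.V) : G.distCycleVerts x ≤ R := by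
  obtain ⟨n, hn, y, hy, h⟩ := hR x
  exact (distCycleVerts_le_of_walkLen hy h).trans hn

lemma distCycleVerts_eq_zero_iff (hR : G.CyclesWithin R) {x : G.V} :
    G.distCycleVerts x = 0 ↔ x ∈ G.cycleVerts := by
  refine ⟨fun h => ?_, fun hx => Nat.le_zero.1 (distCycleVerts_le_of_walkLen hx rfl)⟩
  obtain ⟨y, hy, hxy⟩ := distCycleVerts_spec hR x
  rw [h] at hxy
  exact hxy ▸ hy

lemma distCycleVerts_le_succ_of_adj (hR : G.CyclesWithin R) {x y : G.V} (h : G.Adj x y) :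
    G.distCycleVerts x ≤ G.distCycleVerts y + 1 := by
  obtain ⟨z, hz, hyz⟩ := distCycleVerts_spec hR y
  exact distCycleVerts_le_of_walkLen hz ⟨y, h, hyz⟩

lemma exists_distCycleVerts_head (hR : G.CyclesWithin R) {x : G.V} {m : ℕ}
    (h : G.distCycleVerts x = m + 1) :
    ∃ p, G.tail p = x ∧ G.distCycleVerts (G.head p) = m := by
  obtain ⟨z, hz, _, ⟨p, rfl, rfl⟩, hyz⟩ := h ▸ distCycleVerts_spec hR x
  have hle := distCycleVerts_le_succ_of_adj hR ⟨p, rfl, rfl⟩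
  have hge := distCycleVerts_le_of_walkLen hz hyz
  exact ⟨p, rfl, by omega⟩

lemma exists_reach_enter_cycleVerts_of_lt (hR : G.CyclesWithin R) {g : G.E}
    (hlt : G.distCycleVerts (G.head g) < G.distCycleVerts (G.tail g)) :
    ∃ f, G.Reach g f ∧ G.head f ∈ G.cycleVerts ∧ G.tail f ∉ G.cycleVerts := by
  rcases hm : G.distCycleVerts (G.head g) with _ | m
  · exact ⟨g, .refl, (distCycleVerts_eq_zero_iff hR).1 hm,
      fun h => by rw [(distCycleVerts_eq_zero_iff hR).2 h] at hlt; omega⟩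
  obtain ⟨p, hp, hpm⟩ := exists_distCycleVerts_head hR hm
  have hgp : G.Step g p := ⟨hp, fun h => by rw [h, G.head_bar] at hpm; omega⟩
  obtain ⟨f, hpf, hf⟩ :=
    exists_reach_enter_cycleVerts_of_lt hR (g := p) (by rw [hp, hpm, hm]; omega)
  exact ⟨f, .head hgp hpf, hf⟩
termination_by G.distCycleVerts (G.head g)
decreasing_by omega

lemma exists_reach_enter_cycleVerts (hR : G.CyclesWithin R)
    (hdeg : ∀ x, 2 ≤ G.deg x) {e : G.E} (he : G.head e ∉ G.cycleVerts) :
    ∃ f, G.Reach e f ∧ G.head f ∈ G.cycleVerts ∧ G.tail f ∉ G.cycleVerts := by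
  have hpos : G.distCycleVerts (G.head e) ≠ 0 := mt (distCycleVerts_eq_zero_iff hR).1 he
  obtain ⟨h, heh⟩ := exists_step hdeg e
  rcases lt_trichotomy (G.distCycleVerts (G.head h)) (G.distCycleVerts (G.head e)) with
    hlt | heq | hgt
  · obtain ⟨f, hf, hf'⟩ := exists_reach_enter_cycleVerts_of_lt hR (by rwa [heh.1])
    exact ⟨f, .head heh hf, hf'⟩
  · -- `h` stays level, so the step of `head h` towards the cycles does not backtrack
    obtain ⟨p, hp, hpm⟩ := exists_distCycleVerts_head hR (x := G.head h)
      (m := G.distCycleVerts (G.head h) - 1) (by omega)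
    have hhp : G.Step h p := ⟨hp, fun hpb => by rw [hpb, G.head_bar, heh.1] at hpm; omega⟩
    obtain ⟨f, hf, hf'⟩ := exists_reach_enter_cycleVerts_of_lt hR (by rw [hp, hpm]; omega)
    exact ⟨f, .head heh (.head hhp hf), hf'⟩
  · have := distCycleVerts_le hR (G.head h)
    obtain ⟨f, hf, hf'⟩ := exists_reach_enter_cycleVerts hR hdeg (e := h)
      (fun hz => by rw [(distCycleVerts_eq_zero_iff hR).2 hz] at hgt; omega)
    exact ⟨f, .head heh hf, hf'⟩
termination_by R - G.distCycleVerts (G.head e)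

lemma IsCycle.exists_reach_reach_bar (hR : G.CyclesWithin R)
    (hdeg : ∀ x, 2 ≤ G.deg x) (hconn : G.Connected) (hnc : ¬ G.IsCycleGraph)
    (hl : G.IsCycle l) {e : G.E} (he : e ∈ l) : ∃ f, G.Reach e f ∧ G.Reach f (G.bar f) := by
  obtain ⟨g, hg, hgl, hbg⟩ := hl.exists_exit hconn hnc
  obtain ⟨w, hw, hwg⟩ := List.mem_map.1 hg
  obtain ⟨p, hp, hpw⟩ := hl.exists_step_to_mem hw
  have hpg : G.Step p g := ⟨by rw [← hwg, hpw.1], fun h => hbg (by rwa [h, G.bar_bar])⟩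
  have heg : G.Reach e g := (hl.reach he hp).tail hpg
  by_cases hz : G.head g ∈ G.cycleVerts
  · rcases reach_bar_or_exists_mem_isCycle hz with hrev | ⟨l', hl', hgl'⟩
    · exact ⟨g, heg, hrev⟩
    -- going once around `l'` from `g` ends at `tail g`, so it enters `l` afresh somewhere
    obtain ⟨t, ht⟩ := hl'.exists_isChain_cons hgl'
    obtain ⟨f, hgf, hf, hf'⟩ :=
      exists_reach_first_head_of_isChain (P := (· ∈ l.map G.tail)) ht hg
    refine ⟨f, heg.trans hgf, hl.reach_bar_of_head_mem hf ?_ ?_⟩ <;> rcases hf' with rfl | hf'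
    · exact hgl
    · exact fun h => hf' (List.mem_map_of_mem h)
    · exact hbg
    · exact fun h => hf' (by simpa only [G.head_bar] using hl.head_mem_tails h)
  · obtain ⟨f, hgf, hf⟩ := exists_reach_enter_cycleVerts hR hdeg hz
    exact ⟨f, heg.trans hgf, reach_bar_of_head_mem_cycleVerts hf.1 hf.2⟩

lemma reach_bar_self (hR : G.CyclesWithin R)
    (hdeg : ∀ x, 2 ≤ G.deg x) (hconn : G.Connected) (hnc : ¬ G.IsCycleGraph) (e : G.E) :
    G.Reach e (G.bar e) := by
  obtain ⟨f, hef, hf⟩ : ∃ f, G.Reach e f ∧ G.Reach f (G.bar f) := by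
    by_cases hz : G.head e ∈ G.cycleVerts
    · rcases reach_bar_or_exists_mem_isCycle hz with hrev | ⟨l, hl, hel⟩
      · exact ⟨e, .refl, hrev⟩
      · exact hl.exists_reach_reach_bar hR hdeg hconn hnc hel
    · obtain ⟨f, hef, hf⟩ := exists_reach_enter_cycleVerts hR hdeg hz
      exact ⟨f, hef, reach_bar_of_head_mem_cycleVerts hf.1 hf.2⟩
  exact hef.trans (hf.trans hef.bar)

lemma reach_of_forall_reach_bar (hconn : G.Connected) (hbar : ∀ e, G.Reach e (G.bar e))
    (e f : G.E) : G.Reach e f := by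
  have hstep : ∀ a b, G.tail b = G.head a → G.Reach a b := fun a b hab => by
    by_cases h : b = G.bar a
    · exact h ▸ hbar a
    · exact .single ⟨hab, h⟩
  have hreach : ∀ v, Relation.ReflTransGen G.Adj (G.head e) v →
      ∃ g, G.Reach e g ∧ G.head g = v := by
    intro v hv
    induction hv with
    | refl => exact ⟨e, .refl, rfl⟩
    | tail _ huv ih =>
      obtain ⟨g, heg, hg⟩ := ih
      obtain ⟨h, hh, rfl⟩ := huv
      exact ⟨h, heg.trans (hstep g h (hh.trans hg.symm)), rfl⟩
  obtain ⟨g, heg, hg⟩ := hreach _ (hconn _ (G.tail f))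
  exact heg.trans (hstep g f hg.symm)

theorem reach_of_smallCyclesDense (hconn : G.Connected) (hdeg : ∀ x, 2 ≤ G.deg x)
    (hcyc : G.SmallCyclesDense) (hnc : ¬ G.IsCycleGraph) (e f : G.E) : G.Reach e f := by
  obtain ⟨R, hR⟩ := exists_cyclesWithin hconn hcyc
  exact reach_of_forall_reach_bar hconn (reach_bar_self hR hdeg hconn hnc) e f

lemma q_pos {e f : G.E} (h : G.Step e f) : 0 < G.q e f := by
  have : (2 : ℝ) ≤ G.deg (G.head e) := by exact_mod_cast two_le_deg_of_step h
  rw [q, if_pos h]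
  exact one_div_pos.2 (by linarith)

lemma q_nonneg (e f : G.E) : 0 ≤ G.q e f := by
  by_cases h : G.Step e f
  · exact (q_pos h).le
  · rw [q, if_neg h]

lemma summable_q (e : G.E) : Summable (G.q e) :=
  summable_of_hasFiniteSupport <| (G.locFin (G.head e)).subset fun f hf =>
    by_contra fun hfe => hf (by rw [q, if_neg fun h => hfe h.1])

lemma tsum_q (hdeg : ∀ x, 2 ≤ G.deg x) (e : G.E) : ∑' f, G.q e f = 1 := by
  classical
  set s := (G.locFin (G.head e)).toFinset.erase (G.bar e)
  have hs : ∀ f, f ∈ s ↔ G.Step e f := fun f => by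
    rw [Finset.mem_erase, mem_locFin_toFinset, Step, and_comm]
  have hcard : ((s.card : ℕ) : ℝ) = G.deg (G.head e) - 1 := by
    rw [Finset.card_erase_of_mem (mem_locFin_toFinset.2 (tail_bar e)), ← deg,
      Nat.cast_sub (one_le_two.trans (hdeg _)), Nat.cast_one]
  have hne : (G.deg (G.head e) : ℝ) - 1 ≠ 0 := by
    have : (2 : ℝ) ≤ G.deg (G.head e) := by exact_mod_cast hdeg _
    linarith
  rw [tsum_eq_sum fun f hf => by rw [q, if_neg fun h => hf ((hs f).2 h)],
    Finset.sum_congr rfl fun f hf => by rw [q, if_pos ((hs f).1 hf)], Finset.sum_const,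
    nsmul_eq_mul, hcard, mul_one_div_cancel hne]

lemma qn_succ (n : ℕ) (e f : G.E) : G.qn (n + 1) e f = ∑' g, G.qn n e g * G.q g f := rfl

lemma qn_zero_self (e : G.E) : G.qn 0 e e = 1 := by
  simp [qn]

lemma finite_support_qn : ∀ (n : ℕ) (e : G.E), (support (G.qn n e)).Finite
  | 0, e => (Set.finite_singleton e).subset fun f hf => by
      classical
      by_contra hfe
      exact hf (by simp [qn, Ne.symm hfe])
  | n + 1, e => ((finite_support_qn n e).biUnion fun g _ => G.locFin (G.head g)).subset
      fun f hf => by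
        obtain ⟨g, hg⟩ : ∃ g, G.qn n e g * G.q g f ≠ 0 := by
          by_contra! h
          exact hf (by simp only [qn_succ, h, tsum_zero])
        refine Set.mem_biUnion (left_ne_zero_of_mul hg) ?_
        by_contra hgf
        exact right_ne_zero_of_mul hg (by rw [q, if_neg fun h => hgf h.1])

lemma summable_qn_mul (n : ℕ) (e : G.E) (F : G.E → ℝ) : Summable fun g => G.qn n e g * F g :=
  summable_of_hasFiniteSupport <| (finite_support_qn n e).subset (support_mul_subset_left _ _)

lemma summable_qn (n : ℕ) (e : G.E) : Summable (G.qn n e) := by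
  simpa using summable_qn_mul n e fun _ => 1

lemma qn_nonneg : ∀ (n : ℕ) (e f : G.E), 0 ≤ G.qn n e f
  | 0, e, f => by
      classical
      rw [qn]
      split_ifs <;> norm_num
  | n + 1, e, f => tsum_nonneg fun g => mul_nonneg (qn_nonneg n e g) (q_nonneg g f)

lemma tsum_qn (hdeg : ∀ x, 2 ≤ G.deg x) : ∀ (n : ℕ) (e : G.E), ∑' f, G.qn n e f = 1
  | 0, e => by
      classical
      simp only [qn, eq_comm (a := e)]
      exact tsum_ite_eq e _
  | n + 1, e => by
      have hS : support (G.qn n e) ⊆ (finite_support_qn n e).toFinset := by simp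
      calc ∑' f, G.qn (n + 1) e f
          = ∑' f, ∑ g ∈ (finite_support_qn n e).toFinset, G.qn n e g * G.q g f :=
            tsum_congr fun f => tsum_eq_sum' ((support_mul_subset_left _ _).trans hS)
        _ = ∑ g ∈ (finite_support_qn n e).toFinset, ∑' f, G.qn n e g * G.q g f :=
            Summable.tsum_finsetSum fun g _ => (summable_q g).mul_left _
        _ = ∑' g, G.qn n e g := by
            simp_rw [tsum_mul_left, tsum_q hdeg, mul_one]
            exact (tsum_eq_sum' hS).symm
        _ = 1 := tsum_qn hdeg n e

lemma qn_mul_q_le (n : ℕ) (e g f : G.E) : G.qn n e g * G.q g f ≤ G.qn (n + 1) e f :=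
  (summable_qn_mul n e _).le_tsum g fun h _ => mul_nonneg (qn_nonneg n e h) (q_nonneg h f)

lemma qn_mul_qn_le (m : ℕ) (e g : G.E) :
    ∀ (n : ℕ) (f : G.E), G.qn m e g * G.qn n g f ≤ G.qn (m + n) e f
  | 0, f => by
      classical
      by_cases hgf : g = f
      · subst hgf
        rw [qn_zero_self, mul_one, add_zero]
      · simpa [qn, hgf] using qn_nonneg m e f
  | n + 1, f => by
      rw [qn_succ, ← tsum_mul_left, ← add_assoc, qn_succ]
      refine Summable.tsum_le_tsum (fun h => ?_) ((summable_qn_mul n g _).mul_left _)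
        (summable_qn_mul _ e _)
      rw [← mul_assoc]
      exact mul_le_mul_of_nonneg_right (qn_mul_qn_le m e g n h) (q_nonneg h f)

lemma q_le_qn_one (e f : G.E) : G.q e f ≤ G.qn 1 e f := by
  simpa [qn_zero_self] using qn_mul_q_le 0 e e f

lemma exists_qn_pos_of_reach {e f : G.E} (h : G.Reach e f) : ∃ n, 0 < G.qn n e f := by
  induction h with
  | refl => exact ⟨0, by rw [qn_zero_self]; exact one_pos⟩
  | tail _ hstep ih =>
    obtain ⟨n, hn⟩ := ih
    exact ⟨n + 1, (mul_pos hn (q_pos hstep)).trans_le (qn_mul_q_le n _ _ _)⟩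

lemma exists_qn_self_pos {e f : G.E} (hef : G.Step e f) (hfe : G.Reach f e) :
    ∃ m, 0 < m ∧ 0 < G.qn m e e := by
  obtain ⟨n, hn⟩ := exists_qn_pos_of_reach hfe
  have h1 : 0 < G.qn 1 e f := (q_pos hef).trans_le (q_le_qn_one e f)
  exact ⟨1 + n, by omega, (mul_pos h1 hn).trans_le (qn_mul_qn_le 1 e f n e)⟩

lemma pow_le_qn_mul (m : ℕ) (e : G.E) : ∀ k : ℕ, G.qn m e e ^ k ≤ G.qn (m * k) e e
  | 0 => by rw [pow_zero, mul_zero, qn_zero_self]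
  | k + 1 => by
      rw [pow_succ, Nat.mul_succ]
      exact (mul_le_mul_of_nonneg_right (pow_le_qn_mul m e k) (qn_nonneg m e e)).trans
        (qn_mul_qn_le _ e e m e)

noncomputable instance (x : G.V) : Fintype {e : G.E // G.head e = x} :=
  Set.Finite.fintype (s := {e | G.head e = x}) <|
    ((G.locFin x).image G.bar).subset fun e he =>
      ⟨G.bar e, by simpa [tail_bar] using he, G.bar_bar e⟩

lemma card_head_eq (x : G.V) : Fintype.card {e : G.E // G.head e = x} = G.deg x := by
  have := (G.locFin x).fintype
  rw [deg, Set.Finite.card_toFinset]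
  exact Fintype.card_congr
    { toFun := fun e => ⟨G.bar e.1, by simpa [tail_bar] using e.2⟩
      invFun := fun e => ⟨G.bar e.1, by rw [G.head_bar]; exact e.2⟩
      left_inv := fun e => by simp [G.bar_bar]
      right_inv := fun e => by simp [G.bar_bar] }

lemma qv_eq_sum (n : ℕ) (x y : G.V) :
    G.qv n x y = ∑ j : {e : G.E // G.head e = x} × {f : G.E // G.head f = y},
      1 / (G.deg x : ℝ) * G.qn n j.1 j.2 := by
  simp only [qv, tsum_fintype, ← Finset.mul_sum, Fintype.sum_prod_type]

lemma qv_nonneg (n : ℕ) (x y : G.V) : 0 ≤ G.qv n x y := by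
  rw [qv_eq_sum]
  exact Finset.sum_nonneg fun j _ => mul_nonneg (by positivity) (qn_nonneg n _ _)

lemma qv_le_one (hdeg : ∀ x, 2 ≤ G.deg x) (n : ℕ) (x y : G.V) : G.qv n x y ≤ 1 := by
  have hrow : ∀ e : G.E, ∑' f : {f : G.E // G.head f = y}, G.qn n e f ≤ 1 := fun e =>
    tsum_qn hdeg n e ▸ (summable_qn n e).tsum_subtype_le _ {f | G.head f = y} (qn_nonneg n e)
  have hx : (0 : ℝ) < G.deg x := zero_lt_one.trans_le (one_le_deg hdeg x)
  calc G.qv n x y ≤ 1 / (G.deg x : ℝ) * ∑ _e : {e : G.E // G.head e = x}, 1 := by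
        rw [qv, tsum_fintype]
        gcongr with e
        exact hrow e
    _ = 1 := by
        rw [Finset.sum_const, Finset.card_univ, card_head_eq, nsmul_one,
          one_div_mul_cancel hx.ne']

lemma one_div_deg_mul_qn_le_qv (n : ℕ) {x y : G.V} {e f : G.E} (he : G.head e = x)
    (hf : G.head f = y) : 1 / (G.deg x : ℝ) * G.qn n e f ≤ G.qv n x y := by
  rw [qv_eq_sum]
  exact Finset.single_le_sum (f := fun j : {e : G.E // G.head e = x} × {f : G.E // G.head f = y} =>
    1 / (G.deg x : ℝ) * G.qn n j.1 j.2) (fun j _ => mul_nonneg (by positivity) (qn_nonneg n _ _))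
    (Finset.mem_univ (⟨⟨e, he⟩, ⟨f, hf⟩⟩))

lemma exists_qn_le_mul_qv (hdeg : ∀ x, 2 ≤ G.deg x) (hirr : ∀ e f : G.E, G.Reach e f)
    (e f : G.E) (x y : G.V) : ∃ C d, 0 ≤ C ∧ ∀ n, G.qn n e f ≤ C * G.qv (n + d) x y := by
  obtain ⟨e', he'⟩ := exists_head_eq hdeg x
  obtain ⟨f', hf'⟩ := exists_head_eq hdeg y
  obtain ⟨a, ha⟩ := exists_qn_pos_of_reach (hirr e' e)
  obtain ⟨b, hb⟩ := exists_qn_pos_of_reach (hirr f f')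
  have hx : (0 : ℝ) < G.deg x := zero_lt_one.trans_le (one_le_deg hdeg x)
  refine ⟨G.deg x / (G.qn a e' e * G.qn b f f'), a + b, by positivity, fun n => ?_⟩
  rw [div_mul_eq_mul_div, le_div_iff₀ (mul_pos ha hb)]
  calc G.qn n e f * (G.qn a e' e * G.qn b f f')
      = G.qn a e' e * (G.qn n e f * G.qn b f f') := by ring
    _ ≤ G.qn a e' e * G.qn (n + b) e f' :=
        mul_le_mul_of_nonneg_left (qn_mul_qn_le n e f b f') ha.le
    _ ≤ G.qn (a + (n + b)) e' f' := qn_mul_qn_le a e' e (n + b) f'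
    _ ≤ G.deg x * G.qv (n + (a + b)) x y := by
        rw [show a + (n + b) = n + (a + b) by ring, ← div_le_iff₀' hx, div_eq_inv_mul, ← one_div]
        exact one_div_deg_mul_qn_le_qv _ he' hf'

lemma limsup_qv_le (hdeg : ∀ x, 2 ≤ G.deg x) (hirr : ∀ e f : G.E, G.Reach e f) (x y x' y' : G.V) :
    limsup (fun n : ℕ => G.qv n x y ^ (n : ℝ)⁻¹) atTop ≤
      limsup (fun n : ℕ => G.qv n x' y' ^ (n : ℝ)⁻¹) atTop := by
  choose C d hC hCd using fun j : {e : G.E // G.head e = x} × {f : G.E // G.head f = y} =>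
    exists_qn_le_mul_qv hdeg hirr j.1 j.2 x' y'
  refine limsup_rpow_inv_le_of_le_sum Finset.univ (C := fun j => 1 / (G.deg x : ℝ) * C j) (d := d)
    (fun j _ => mul_nonneg (by positivity) (hC j)) (qv_nonneg · x y) (qv_nonneg · x' y')
    (qv_le_one hdeg · x' y') fun n => ?_
  rw [qv_eq_sum]
  refine Finset.sum_le_sum fun j _ => ?_
  rw [mul_assoc]
  exact mul_le_mul_of_nonneg_left (hCd j n) (by positivity)

lemma pos_limsup_qv_self (hdeg : ∀ x, 2 ≤ G.deg x) (hirr : ∀ e f : G.E, G.Reach e f) (x : G.V) :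
    0 < limsup (fun n : ℕ => G.qv n x x ^ (n : ℝ)⁻¹) atTop := by
  obtain ⟨e, rfl⟩ := exists_head_eq hdeg x
  obtain ⟨f, hef⟩ := exists_step hdeg e
  obtain ⟨m, hm, hδ⟩ := exists_qn_self_pos hef (hirr f e)
  set c : ℝ := 1 / G.deg (G.head e)
  have hc : 0 < c := one_div_pos.2 (zero_lt_one.trans_le (one_le_deg hdeg _))
  have hc1 : c ≤ 1 := div_le_one_of_le₀ (one_le_deg hdeg _) (by positivity)
  have hcδ : 0 < c * G.qn m e e := mul_pos hc hδ
  refine (Real.rpow_pos_of_pos hcδ (m : ℝ)⁻¹).trans_le (le_limsup_rpow_inv_of_frequently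
    (qv_nonneg · _ _) (qv_le_one hdeg · _ _) (by positivity) ?_)
  refine frequently_atTop.2 fun N =>
    ⟨m * (N + 1), (Nat.le_mul_of_pos_left _ hm).trans' (by omega), ?_⟩
  rw [pow_mul, Real.rpow_inv_natCast_pow hcδ.le hm.ne', mul_pow]
  calc c ^ (N + 1) * G.qn m e e ^ (N + 1) ≤ c * G.qn (m * (N + 1)) e e := by
        gcongr
        · exact pow_le_of_le_one hc.le hc1 (by omega)
        · exact pow_le_qn_mul m e (N + 1)
    _ ≤ G.qv (m * (N + 1)) (G.head e) (G.head e) := one_div_deg_mul_qn_le_qv _ rfl rfl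

end Multigraph

/-- If small cycles are dense in a locally finite connected
multigraph with minimum degree 2 that is not a cycle, then the spectral radius
`ρ(Q) = limsup_n q^(n)(x,y)^{1/n}` is independent of `x, y`, and `0 < ρ(Q) ≤ 1`. -/
theorem nbrw_spectral_radius_well_defined (G : Multigraph)
    (hconn : G.Connected) (hdeg : ∀ x, 2 ≤ G.deg x)
    (hcyc : G.SmallCyclesDense) (hnc : ¬ G.IsCycleGraph) :
    ∃ ρ : ℝ, 0 < ρ ∧ ρ ≤ 1 ∧
      ∀ x y : G.V,
        Filter.limsup (fun n : ℕ => G.qv n x y ^ ((n : ℝ)⁻¹)) Filter.atTop = ρ := by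
  rcases isEmpty_or_nonempty G.V with _ | ⟨⟨x₀⟩⟩
  · exact ⟨1, one_pos, le_rfl, fun x => isEmptyElim x⟩
  have hirr := Multigraph.reach_of_smallCyclesDense hconn hdeg hcyc hnc
  refine ⟨_, Multigraph.pos_limsup_qv_self hdeg hirr x₀,
    limsup_rpow_inv_le_one (Multigraph.qv_nonneg · x₀ x₀) (Multigraph.qv_le_one hdeg · x₀ x₀),
    fun x y => ?_⟩
  exact (Multigraph.limsup_qv_le hdeg hirr x y x₀ x₀).antisymm
    (Multigraph.limsup_qv_le hdeg hirr x₀ x₀ x y)
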